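/- arXiv:1602.08907 — 2 statements merged into one kernel-verified Lean document; each statement's English description precedes it below -/
import Mathlib

section
/- Let G be a connected simple graph of order n ≥ 4. Then τ(G) = n−2 if and only if G is isomorphic to one of the following four graphs: (a) the complete split graph K_{n−2} ∨ \overline{K_2} (the complete graph K_n minus one edge); (b) the graph K_1 ∨ (K_1 + K_{n−2}) (the complete graph K_{n−1} with one pendant leaf attached); (c) the complete bipartite graph K_{2,n−2}; (d) the complete split graph \overline{K_{n−2}} ∨ K_2. -/
open Classical SimpleGraph

noncomputable section

/-- The distance from a vertex to a set of vertices. -/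
def setDist {V : Type*} (G : SimpleGraph V) (u : V) (S : Set V) : ℕ :=
  sInf ((G.dist u) '' S)

/-- A locating partition of a graph: a partition of the vertex set such that every
vertex is uniquely determined by its vector of distances to the parts. -/
def IsLocatingPartition {V : Type*} (G : SimpleGraph V) (P : Set (Set V)) : Prop :=
  Setoid.IsPartition P ∧
    ∀ u v : V, (∀ S ∈ P, setDist G u S = setDist G v S) → u = v

/-- The partition dimension: the minimum cardinality of a locating partition. -/
def partitionDim {V : Type*} (G : SimpleGraph V) : ℕ :=
  sInf {k | ∃ P : Set (Set V), IsLocatingPartition G P ∧ P.ncard = k}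

/-- Two vertices are twins if they have the same neighbors other than themselves. -/
def IsTwin {V : Type*} (G : SimpleGraph V) (u v : V) : Prop :=
  G.neighborSet u \ {v} = G.neighborSet v \ {u}

/-- The twin class of a vertex. -/
def twinClass {V : Type*} (G : SimpleGraph V) (u : V) : Set V :=
  {v | IsTwin G u v}

/-- The twin number: the maximum cardinality of a twin class. -/
def twinNumber {V : Type*} (G : SimpleGraph V) : ℕ :=
  sSup {k | ∃ u : V, (twinClass G u).ncard = k}

/-- The disjoint union of two graphs. -/
def graphSum {α β : Type*} (G : SimpleGraph α) (H : SimpleGraph β) :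
    SimpleGraph (α ⊕ β) where
  Adj x y :=
    match x, y with
    | Sum.inl a, Sum.inl b => G.Adj a b
    | Sum.inr a, Sum.inr b => H.Adj a b
    | _, _ => False
  symm := by
    constructor
    rintro (a|a) (b|b) h
    · exact G.adj_symm h
    · exact h.elim
    · exact h.elim
    · exact H.adj_symm h
  loopless := by
    constructor
    rintro (a|a) h
    · exact G.irrefl h
    · exact H.irrefl h

/-- The join of two graphs: disjoint union plus all edges between the two sides. -/
def graphJoin {α β : Type*} (G : SimpleGraph α) (H : SimpleGraph β) :
    SimpleGraph (α ⊕ β) where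
  Adj x y :=
    match x, y with
    | Sum.inl a, Sum.inl b => G.Adj a b
    | Sum.inr a, Sum.inr b => H.Adj a b
    | _, _ => True
  symm := by
    constructor
    rintro (a|a) (b|b) h
    · exact G.adj_symm h
    · trivial
    · trivial
    · exact H.adj_symm h
  loopless := by
    constructor
    rintro (a|a) h
    · exact G.irrefl h
    · exact H.irrefl h

/-! A twin class `W` with `|W| = n - 2` leaves two vertices `x, y` outside it. A twin class is a
clique or an independent set, and every vertex outside it is adjacent to all of it or to none of
it. If both `x` and `y` see `W`, then `G` is the join of `W` and `{x, y}`, which gives (a), (c)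
and (d); when `W` is a clique, `x ~ y` would make `x` a twin of `W`. If only `x` sees `W`,
connectivity makes `y` a leaf at `x`, and `W` must be a clique, since otherwise `y` would be a
twin of `W`: this is (b). If neither does, no edge leaves `W`, against connectivity.
Conversely, in each of the four graphs the part of size `n - 2` is a whole twin class. -/

section Adjacency

variable {α β : Type*} (G : SimpleGraph α) (H : SimpleGraph β)

@[simp] theorem graphJoin_adj_inl_inl (a b : α) :
    (graphJoin G H).Adj (.inl a) (.inl b) ↔ G.Adj a b := Iff.rfl

@[simp] theorem graphJoin_adj_inr_inr (a b : β) :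
    (graphJoin G H).Adj (.inr a) (.inr b) ↔ H.Adj a b := Iff.rfl

@[simp] theorem graphJoin_adj_inl_inr (a : α) (b : β) :
    (graphJoin G H).Adj (.inl a) (.inr b) := trivial

@[simp] theorem graphJoin_adj_inr_inl (a : β) (b : α) :
    (graphJoin G H).Adj (.inr a) (.inl b) := trivial

@[simp] theorem graphSum_adj_inl_inl (a b : α) :
    (graphSum G H).Adj (.inl a) (.inl b) ↔ G.Adj a b := Iff.rfl

@[simp] theorem graphSum_adj_inr_inr (a b : β) :
    (graphSum G H).Adj (.inr a) (.inr b) ↔ H.Adj a b := Iff.rfl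

@[simp] theorem graphSum_not_adj_inl_inr (a : α) (b : β) :
    ¬ (graphSum G H).Adj (.inl a) (.inr b) := id

@[simp] theorem graphSum_not_adj_inr_inl (a : β) (b : α) :
    ¬ (graphSum G H).Adj (.inr a) (.inl b) := id

end Adjacency

section Isomorphisms

variable {α β γ δ V : Type*}

def SimpleGraph.Iso.graphJoinCongr {G₁ : SimpleGraph α} {G₂ : SimpleGraph β}
    {H₁ : SimpleGraph γ} {H₂ : SimpleGraph δ} (e₁ : G₁ ≃g H₁) (e₂ : G₂ ≃g H₂) :
    graphJoin G₁ G₂ ≃g graphJoin H₁ H₂ where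
  toEquiv := Equiv.sumCongr e₁.toEquiv e₂.toEquiv
  map_rel_iff' := by rintro (a | a) (b | b) <;> simp [Iso.map_adj_iff]

def SimpleGraph.Iso.graphSumCongr {G₁ : SimpleGraph α} {G₂ : SimpleGraph β}
    {H₁ : SimpleGraph γ} {H₂ : SimpleGraph δ} (e₁ : G₁ ≃g H₁) (e₂ : G₂ ≃g H₂) :
    graphSum G₁ G₂ ≃g graphSum H₁ H₂ where
  toEquiv := Equiv.sumCongr e₁.toEquiv e₂.toEquiv
  map_rel_iff' := by rintro (a | a) (b | b) <;> simp [Iso.map_adj_iff]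

def graphJoinBotBotIso : graphJoin (⊥ : SimpleGraph α) (⊥ : SimpleGraph β) ≃g
    completeBipartiteGraph β α where
  toEquiv := Equiv.sumComm α β
  map_rel_iff' := by rintro (a | a) (b | b) <;> simp

variable {G : SimpleGraph V} {s : Set V}

def graphJoinInduceIso (h : ∀ a ∈ s, ∀ b ∉ s, G.Adj a b) :
    graphJoin (G.induce s) (G.induce sᶜ) ≃g G where
  toEquiv := Equiv.Set.sumCompl s
  map_rel_iff' := by
    rintro (⟨a, ha⟩ | ⟨a, ha⟩) (⟨b, hb⟩ | ⟨b, hb⟩)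
    · simp
    · simpa using h a ha b hb
    · simpa using (h b hb a ha).symm
    · simp

def graphSumInduceIso (h : ∀ a ∈ s, ∀ b ∉ s, ¬ G.Adj a b) :
    graphSum (G.induce s) (G.induce sᶜ) ≃g G where
  toEquiv := Equiv.Set.sumCompl s
  map_rel_iff' := by
    rintro (⟨a, ha⟩ | ⟨a, ha⟩) (⟨b, hb⟩ | ⟨b, hb⟩)
    · simp
    · simpa using h a ha b hb
    · simpa using fun hba => h b hb a ha hba.symm
    · simp

variable [Finite V] {m : ℕ}

def SimpleGraph.IsClique.induceIsoTop (hs : G.IsClique s) (hm : s.ncard = m) :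
    G.induce s ≃g (⊤ : SimpleGraph (Fin m)) where
  toEquiv := Finite.equivFinOfCardEq hm
  map_rel_iff' := by simp [induce_eq_top.mpr hs]

def SimpleGraph.IsIndepSet.induceIsoBot (hs : G.IsIndepSet s) (hm : s.ncard = m) :
    G.induce s ≃g (⊥ : SimpleGraph (Fin m)) where
  toEquiv := Finite.equivFinOfCardEq hm
  map_rel_iff' {a b} := iff_of_false id fun h => hs a.2 b.2 (h.ne ∘ Subtype.ext) h

end Isomorphisms

section Twins

variable {V V' : Type*} {G : SimpleGraph V} {u v w z : V}

theorem isTwin_iff : IsTwin G u v ↔ ∀ z, z ≠ u → z ≠ v → (G.Adj u z ↔ G.Adj v z) := by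
  refine ⟨fun h z hzu hzv => by simpa [hzu, hzv] using Set.ext_iff.mp h z, fun h => ?_⟩
  ext z
  simp only [Set.mem_sdiff, SimpleGraph.mem_neighborSet, Set.mem_singleton_iff]
  exact ⟨fun ⟨hz, hzv⟩ => ⟨(h z hz.ne' hzv).mp hz, hz.ne'⟩,
    fun ⟨hz, hzu⟩ => ⟨(h z hzu hz.ne').mpr hz, hz.ne'⟩⟩

theorem IsTwin.adj_iff (h : IsTwin G u v) (hzu : z ≠ u) (hzv : z ≠ v) :
    G.Adj u z ↔ G.Adj v z :=
  isTwin_iff.mp h z hzu hzv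

theorem isTwin_refl (G : SimpleGraph V) (u : V) : IsTwin G u u := rfl

theorem IsTwin.symm (h : IsTwin G u v) : IsTwin G v u := Eq.symm h

theorem IsTwin.trans (huv : IsTwin G u v) (hvw : IsTwin G v w) : IsTwin G u w := by
  rcases eq_or_ne u v with rfl | huv'; · exact hvw
  rcases eq_or_ne v w with rfl | hvw'; · exact huv
  rcases eq_or_ne u w with rfl | huw; · exact isTwin_refl G u
  rw [isTwin_iff] at huv hvw ⊢
  intro z hzu hzw
  rcases eq_or_ne z v with rfl | hzv
  · constructor
    · intro h
      have hwu : G.Adj w u := (hvw u huv' huw).mp h.symm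
      exact ((huv w huw.symm hvw'.symm).mp hwu.symm).symm
    · intro h
      have huw' : G.Adj u w := (huv w huw.symm hvw'.symm).mpr h.symm
      exact ((hvw u huv' huw).mpr huw'.symm).symm
  · exact (huv z hzu hzv).trans (hvw z hzv hzw)

theorem mem_twinClass : v ∈ twinClass G u ↔ IsTwin G u v := Iff.rfl

theorem mem_twinClass_self (G : SimpleGraph V) (u : V) : u ∈ twinClass G u := isTwin_refl G u

theorem twinClass_eq_of_mem (h : v ∈ twinClass G u) : twinClass G v = twinClass G u :=
  Set.ext fun _ => ⟨h.trans, h.symm.trans⟩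

theorem twinClass_subset_compl_of_notMem (h : v ∉ twinClass G u) :
    twinClass G v ⊆ (twinClass G u)ᶜ :=
  fun _ hw hwu => h (hwu.trans hw.symm)

theorem adj_iff_adj_of_mem_twinClass (hw : w ∈ twinClass G u) (hz : z ∉ twinClass G u) :
    G.Adj w z ↔ G.Adj u z :=
  (hw.adj_iff (z := z) (fun h => hz (h ▸ mem_twinClass_self G u)) fun h => hz (h ▸ hw)).symm

theorem isTwin_of_forall_adj (hu : ∀ z ≠ u, G.Adj u z) (hv : ∀ z ≠ v, G.Adj v z) :
    IsTwin G u v :=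
  isTwin_iff.mpr fun z hzu hzv => iff_of_true (hu z hzu) (hv z hzv)

theorem isTwin_of_mem_twinClass (hv : v ∈ twinClass G u) (hw : w ∈ twinClass G u) :
    IsTwin G v w :=
  hv.symm.trans hw

theorem adj_of_adj_of_mem_twinClass {a b c d : V} (ha : a ∈ twinClass G u)
    (hb : b ∈ twinClass G u) (hc : c ∈ twinClass G u) (hd : d ∈ twinClass G u) (hab : a ≠ b)
    (hcd : G.Adj c d) : G.Adj a b := by
  obtain ⟨x, hx, hax⟩ : ∃ x ∈ twinClass G u, G.Adj a x := by
    rcases eq_or_ne a d with rfl | had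
    · exact ⟨c, hc, hcd.symm⟩
    · exact ⟨d, hd, ((isTwin_of_mem_twinClass hc ha).adj_iff hcd.ne' had.symm).mp hcd⟩
  rcases eq_or_ne x b with rfl | hxb
  · exact hax
  · exact (((isTwin_of_mem_twinClass hx hb).adj_iff hax.ne hab).mp hax.symm).symm

theorem isClique_twinClass_or_isIndepSet (G : SimpleGraph V) (u : V) :
    G.IsClique (twinClass G u) ∨ G.IsIndepSet (twinClass G u) := by
  by_cases h : ∃ c ∈ twinClass G u, ∃ d ∈ twinClass G u, G.Adj c d
  · obtain ⟨c, hc, d, hd, hcd⟩ := h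
    exact .inl fun a ha b hb hab => adj_of_adj_of_mem_twinClass ha hb hc hd hab hcd
  · push Not at h
    exact .inr fun a ha b hb _ => h a ha b hb

theorem SimpleGraph.Iso.isTwin_iff {H : SimpleGraph V'} (e : G ≃g H) :
    IsTwin H (e u) (e v) ↔ IsTwin G u v := by
  simp only [_root_.isTwin_iff, e.surjective.forall, e.injective.ne_iff, e.map_adj_iff]

theorem SimpleGraph.Iso.twinClass_apply {H : SimpleGraph V'} (e : G ≃g H) (u : V) :
    twinClass H (e u) = e '' twinClass G u := by
  ext z
  obtain ⟨w, rfl⟩ := e.surjective z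
  simp [mem_twinClass, e.isTwin_iff]

theorem SimpleGraph.Iso.twinNumber_eq {H : SimpleGraph V'} (e : G ≃g H) :
    twinNumber G = twinNumber H := by
  have h : ∀ u, (twinClass H (e u)).ncard = (twinClass G u).ncard := fun u => by
    rw [e.twinClass_apply, Set.ncard_image_of_injective _ e.injective]
  unfold twinNumber
  congr 1
  ext k
  simp only [Set.mem_ofPred_eq, e.surjective.exists, h]

theorem exists_ncard_twinClass_eq_twinNumber [Finite V] [Nonempty V] (G : SimpleGraph V) :
    ∃ u, (twinClass G u).ncard = twinNumber G :=
  Set.Nonempty.csSup_mem (Set.range_nonempty _) (Set.finite_range _)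

theorem twinNumber_eq_ncard_twinClass [Finite V]
    (h : Nat.card V ≤ 2 * (twinClass G u).ncard) : twinNumber G = (twinClass G u).ncard := by
  refine IsGreatest.csSup_eq ⟨⟨u, rfl⟩, ?_⟩
  rintro _ ⟨v, rfl⟩
  by_cases hv : v ∈ twinClass G u
  · rw [twinClass_eq_of_mem hv]
  · calc (twinClass G v).ncard ≤ (twinClass G u)ᶜ.ncard :=
          Set.ncard_le_ncard (twinClass_subset_compl_of_notMem hv)
      _ = Nat.card V - (twinClass G u).ncard := Set.ncard_compl _
      _ ≤ (twinClass G u).ncard := by omega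

end Twins

section TwinNumberOfJoins

variable {α β γ V : Type*}

theorem twinNumber_eq_of_twinClass_eq_range [Finite V] {ι : Type*} {G : SimpleGraph V} {u : V}
    {f : ι → V} (hf : f.Injective) (hu : twinClass G u = Set.range f)
    (h : Nat.card V ≤ 2 * Nat.card ι) : twinNumber G = Nat.card ι := by
  rw [twinNumber_eq_ncard_twinClass, hu, Set.ncard_range_of_injective hf]
  rwa [hu, Set.ncard_range_of_injective hf]

theorem twinClass_graphJoin_bot_inl [Nontrivial α] (H : SimpleGraph β) (a : α) :
    twinClass (graphJoin (⊥ : SimpleGraph α) H) (.inl a) = Set.range Sum.inl := by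
  ext (b | i)
  · simp [mem_twinClass, isTwin_iff]
  · obtain ⟨b, hb⟩ := exists_ne a
    simp only [mem_twinClass, isTwin_iff, Set.mem_range, reduceCtorEq, exists_false, iff_false,
      not_forall]
    exact ⟨.inl b, by simpa using hb, by simp, by simp⟩

theorem twinClass_graphJoin_top_bot_inl [Nontrivial β] (a : α) :
    twinClass (graphJoin (⊤ : SimpleGraph α) (⊥ : SimpleGraph β)) (.inl a) =
      Set.range Sum.inl := by
  ext (b | i)
  · simpa [mem_twinClass, isTwin_iff] using
      fun c hca hcb => ⟨fun _ => Ne.symm hcb, fun _ => Ne.symm hca⟩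
  · obtain ⟨j, hj⟩ := exists_ne i
    simp only [mem_twinClass, isTwin_iff, Set.mem_range, reduceCtorEq, exists_false, iff_false,
      not_forall]
    exact ⟨.inr j, by simp, by simpa using hj, by simp⟩

theorem twinClass_graphJoin_graphSum_inr_inr [Nonempty α] [Nontrivial β] (b : β) :
    twinClass
      (graphJoin (⊤ : SimpleGraph γ) (graphSum (⊤ : SimpleGraph α) (⊤ : SimpleGraph β)))
      (.inr (.inr b)) = Set.range (Sum.inr ∘ Sum.inr) := by
  ext (c | a | b')
  · simp only [mem_twinClass, isTwin_iff, Set.mem_range, Function.comp_apply, reduceCtorEq,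
      exists_false, iff_false, not_forall]
    exact ⟨.inr (.inl (Classical.arbitrary α)), by simp, by simp, by simp⟩
  · obtain ⟨b', hb'⟩ := exists_ne b
    simp only [mem_twinClass, isTwin_iff, Set.mem_range, Function.comp_apply, reduceCtorEq,
      Sum.inr.injEq, exists_false, iff_false, not_forall]
    exact ⟨.inr (.inr b'), by simpa using hb', by simp, by simpa using hb'.symm⟩
  · simpa [mem_twinClass, isTwin_iff] using
      fun c hcb hcb' => ⟨fun _ => Ne.symm hcb', fun _ => Ne.symm hcb⟩

variable [Finite α] [Finite β]

theorem twinNumber_graphJoin_bot [Nontrivial α] (H : SimpleGraph β)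
    (h : Nat.card β ≤ Nat.card α) :
    twinNumber (graphJoin (⊥ : SimpleGraph α) H) = Nat.card α :=
  twinNumber_eq_of_twinClass_eq_range Sum.inl_injective
    (twinClass_graphJoin_bot_inl H (Classical.arbitrary α)) (by rw [Nat.card_sum]; omega)

theorem twinNumber_graphJoin_top_bot [Nontrivial β] (h : Nat.card β ≤ Nat.card α) :
    twinNumber (graphJoin (⊤ : SimpleGraph α) (⊥ : SimpleGraph β)) = Nat.card α := by
  have : Nonempty α := Nat.card_pos_iff.mp (by linarith [Finite.one_lt_card (α := β)]) |>.1
  exact twinNumber_eq_of_twinClass_eq_range Sum.inl_injective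
    (twinClass_graphJoin_top_bot_inl (Classical.arbitrary α)) (by rw [Nat.card_sum]; omega)

theorem twinNumber_graphJoin_graphSum [Finite γ] [Nonempty α] [Nontrivial β]
    (h : Nat.card γ + Nat.card α ≤ Nat.card β) :
    twinNumber (graphJoin (⊤ : SimpleGraph γ)
      (graphSum (⊤ : SimpleGraph α) (⊤ : SimpleGraph β))) = Nat.card β :=
  twinNumber_eq_of_twinClass_eq_range (Sum.inr_injective.comp Sum.inr_injective)
    (twinClass_graphJoin_graphSum_inr_inr (γ := γ) (Classical.arbitrary β))
    (by simp only [Nat.card_sum]; omega)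

end TwinNumberOfJoins

theorem SimpleGraph.Preconnected.exists_adj_of_mem_of_notMem {V : Type*} {G : SimpleGraph V}
    (hG : G.Preconnected) {S : Set V} {u v : V} (hu : u ∈ S) (hv : v ∉ S) :
    ∃ a ∈ S, ∃ b ∉ S, G.Adj a b := by
  obtain ⟨d, -, hd₁, hd₂⟩ := (hG u v).some.exists_boundary_dart S hu hv
  exact ⟨_, hd₁, _, hd₂, d.adj⟩

def isoOfUniversalOfLeaf {V : Type*} [Finite V] {G : SimpleGraph V} {x y : V} {m : ℕ}
    (hxy : x ≠ y) (hx : ∀ v ≠ x, G.Adj x v) (hy : ∀ v, G.Adj y v → v = x)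
    (hs : G.IsClique {x, y}ᶜ) (hm : ({x, y}ᶜ : Set V).ncard = m) :
    G ≃g graphJoin (⊤ : SimpleGraph (Fin 1))
      (graphSum (⊤ : SimpleGraph (Fin 1)) (⊤ : SimpleGraph (Fin m))) :=
  let t : Set ({x}ᶜ : Set V) := {v | v.1 = y}
  have hcross : ∀ a ∈ ({x} : Set V), ∀ b ∉ ({x} : Set V), G.Adj a b := by
    rintro a rfl b hb
    exact hx b hb
  have hsep : ∀ a ∈ t, ∀ b ∉ t, ¬ (G.induce {x}ᶜ).Adj a b := by
    intro a (ha : a.1 = y) b _ hab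
    exact b.2 (hy b (ha ▸ hab))
  have ht : t = {⟨y, hxy.symm⟩} := by
    ext ⟨v, hv⟩
    simp [t, Subtype.ext_iff]
  have htc : tᶜ = Subtype.val ⁻¹' ({x, y}ᶜ : Set V) := by
    ext ⟨v, hv⟩
    simp [t, show v ≠ x from hv]
  have htc_clique : (G.induce {x}ᶜ).IsClique tᶜ := by
    rw [htc]
    exact fun a ha b hb hab => hs ha hb (Subtype.val_injective.ne hab)
  have htc_card : tᶜ.ncard = m := by
    rw [htc, Set.ncard_preimage_of_injective_subset_range Subtype.val_injective, hm]
    exact fun v hv => ⟨⟨v, fun h => hv (.inl h)⟩, rfl⟩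
  (graphJoinInduceIso hcross).symm.trans <|
    Iso.graphJoinCongr ((isClique_singleton x).induceIsoTop (Set.ncard_singleton x)) <|
    (graphSumInduceIso hsep).symm.trans <|
    Iso.graphSumCongr
      ((IsClique.of_subsingleton (ht ▸ Set.subsingleton_singleton)).induceIsoTop
        (by rw [ht, Set.ncard_singleton]))
      (htc_clique.induceIsoTop htc_card)

section Classification

variable {V : Type*} [Finite V] {G : SimpleGraph V} {u x y : V} {m : ℕ}

theorem nonempty_iso_of_twinClass_compl_eq_pair_of_adj_of_adj (hxy : x ≠ y)
    (hC : (twinClass G u)ᶜ = {x, y}) (hm : (twinClass G u).ncard = m) (hux : G.Adj u x)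
    (huy : G.Adj u y) :
    Nonempty (G ≃g graphJoin (⊤ : SimpleGraph (Fin m)) (⊥ : SimpleGraph (Fin 2))) ∨
      Nonempty (G ≃g completeBipartiteGraph (Fin 2) (Fin m)) ∨
      Nonempty (G ≃g graphJoin (⊥ : SimpleGraph (Fin m)) (⊤ : SimpleGraph (Fin 2))) := by
  have hout : ∀ {b}, b ∉ twinClass G u → b = x ∨ b = y := fun hb => by
    simpa [← Set.mem_compl_iff, hC] using hb
  have hcross : ∀ a ∈ twinClass G u, ∀ b ∉ twinClass G u, G.Adj a b := by
    intro a ha b hb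
    rw [adj_iff_adj_of_mem_twinClass ha hb]
    rcases hout hb with rfl | rfl <;> assumption
  have hC₂ : (twinClass G u)ᶜ.ncard = 2 := by rw [hC, Set.ncard_pair hxy]
  have hindep : ¬ G.Adj x y → G.IsIndepSet (twinClass G u)ᶜ := fun hxy' => by
    rw [hC]
    exact Set.pairwise_pair.mpr fun _ => ⟨hxy', fun h => hxy' h.symm⟩
  rcases isClique_twinClass_or_isIndepSet G u with hW | hW
  · have hx : x ∉ twinClass G u := by simp [← Set.mem_compl_iff, hC]
    have hu : ∀ z ≠ u, G.Adj u z := fun z hzu => by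
      by_cases hz : z ∈ twinClass G u
      exacts [hW (mem_twinClass_self G u) hz hzu.symm, hcross u (mem_twinClass_self G u) z hz]
    have hxy' : ¬ G.Adj x y := fun h => hx <| isTwin_of_forall_adj hu fun z hzx => by
      by_cases hz : z ∈ twinClass G u
      exacts [(hcross z hz x hx).symm, (hout hz).resolve_left hzx ▸ h]
    exact .inl ⟨(graphJoinInduceIso hcross).symm.trans
      (Iso.graphJoinCongr (hW.induceIsoTop hm) ((hindep hxy').induceIsoBot hC₂))⟩
  · by_cases hxy' : G.Adj x y
    · have hclique : G.IsClique (twinClass G u)ᶜ := by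
        rw [hC]
        exact isClique_pair.mpr fun _ => hxy'
      exact .inr <| .inr ⟨(graphJoinInduceIso hcross).symm.trans
        (Iso.graphJoinCongr (hW.induceIsoBot hm) (hclique.induceIsoTop hC₂))⟩
    · exact .inr <| .inl ⟨((graphJoinInduceIso hcross).symm.trans
        (Iso.graphJoinCongr (hW.induceIsoBot hm) ((hindep hxy').induceIsoBot hC₂))).trans
        graphJoinBotBotIso⟩

theorem nonempty_iso_of_twinClass_compl_eq_pair_of_adj_of_not_adj (hG : G.Connected)
    (hxy : x ≠ y) (hC : (twinClass G u)ᶜ = {x, y}) (hm : (twinClass G u).ncard = m)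
    (hux : G.Adj u x) (huy : ¬ G.Adj u y) :
    Nonempty (G ≃g graphJoin (⊤ : SimpleGraph (Fin 1))
      (graphSum (⊤ : SimpleGraph (Fin 1)) (⊤ : SimpleGraph (Fin m)))) := by
  have hW : twinClass G u = {x, y}ᶜ := by rw [← hC, compl_compl]
  have hx : x ∉ twinClass G u := by simp [hW]
  have hy : y ∉ twinClass G u := by simp [hW]
  have hy_nbr : ∀ v, G.Adj y v → v = x := fun v hv => by
    by_contra hvx
    have hv_mem : v ∈ twinClass G u := by simp [hW, hvx, hv.ne']
    exact huy ((adj_iff_adj_of_mem_twinClass hv_mem hy).mp hv.symm)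
  have hxy' : G.Adj x y := by
    obtain ⟨a, ha, b, -, hab⟩ :=
      hG.preconnected.exists_adj_of_mem_of_notMem (Set.mem_singleton y)
        fun h => hy (h ▸ mem_twinClass_self G u)
    rw [Set.mem_singleton_iff] at ha
    subst ha
    exact hy_nbr b hab ▸ hab.symm
  have hclique : G.IsClique (twinClass G u) := by
    refine (isClique_twinClass_or_isIndepSet G u).resolve_right fun hind => hy ?_
    refine isTwin_iff.mpr fun z hzu hzy => ?_
    by_cases hz : z ∈ twinClass G u
    · exact iff_of_false (hind (mem_twinClass_self G u) hz hzu.symm)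
        fun h => hx (hy_nbr z h ▸ hz)
    · obtain rfl : z = x := by simpa [hW, hzy] using hz
      exact iff_of_true hux hxy'.symm
  have hx_univ : ∀ v ≠ x, G.Adj x v := fun v hvx => by
    by_cases hv : v ∈ twinClass G u
    · exact ((adj_iff_adj_of_mem_twinClass hv hx).mpr hux).symm
    · obtain rfl : v = y := by simpa [hW, hvx] using hv
      exact hxy'
  exact ⟨isoOfUniversalOfLeaf hxy hx_univ hy_nbr (hW ▸ hclique) (hW ▸ hm)⟩

theorem nonempty_iso_of_twinClass_compl_eq_pair (hG : G.Connected) (hxy : x ≠ y)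
    (hC : (twinClass G u)ᶜ = {x, y}) (hm : (twinClass G u).ncard = m) :
    Nonempty (G ≃g graphJoin (⊤ : SimpleGraph (Fin m)) (⊥ : SimpleGraph (Fin 2))) ∨
      Nonempty (G ≃g graphJoin (⊤ : SimpleGraph (Fin 1))
        (graphSum (⊤ : SimpleGraph (Fin 1)) (⊤ : SimpleGraph (Fin m)))) ∨
      Nonempty (G ≃g completeBipartiteGraph (Fin 2) (Fin m)) ∨
      Nonempty (G ≃g graphJoin (⊥ : SimpleGraph (Fin m)) (⊤ : SimpleGraph (Fin 2))) := by
  by_cases hux : G.Adj u x <;> by_cases huy : G.Adj u y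
  · have := nonempty_iso_of_twinClass_compl_eq_pair_of_adj_of_adj hxy hC hm hux huy
    tauto
  · exact .inr <| .inl <|
      nonempty_iso_of_twinClass_compl_eq_pair_of_adj_of_not_adj hG hxy hC hm hux huy
  · exact .inr <| .inl <| nonempty_iso_of_twinClass_compl_eq_pair_of_adj_of_not_adj hG
      hxy.symm (Set.pair_comm x y ▸ hC) hm huy hux
  · exfalso
    obtain ⟨a, ha, b, hb, hab⟩ := hG.preconnected.exists_adj_of_mem_of_notMem
      (mem_twinClass_self G u) (by simp [← Set.mem_compl_iff, hC] : x ∉ twinClass G u)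
    rw [adj_iff_adj_of_mem_twinClass ha hb] at hab
    rcases (by simpa [← Set.mem_compl_iff, hC] using hb : b = x ∨ b = y) with rfl | rfl
    exacts [hux hab, huy hab]

end Classification

/-- For a connected graph `G` of order `n ≥ 4`: `τ(G) = n - 2` iff `G` is
isomorphic to `K_{n-2} ∨ K̄_2`, `K_1 ∨ (K_1 + K_{n-2})`, `K_{2,n-2}`, or
`K̄_{n-2} ∨ K_2`. -/
theorem twinNumber_eq_order_sub_two_iff {V : Type*} [Fintype V]
    (G : SimpleGraph V) (hG : G.Connected) (n : ℕ) (hn : Fintype.card V = n)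
    (h4 : 4 ≤ n) :
    twinNumber G = n - 2 ↔
      (Nonempty (G ≃g graphJoin (⊤ : SimpleGraph (Fin (n - 2))) (⊥ : SimpleGraph (Fin 2))) ∨
       Nonempty (G ≃g graphJoin (⊤ : SimpleGraph (Fin 1))
          (graphSum (⊤ : SimpleGraph (Fin 1)) (⊤ : SimpleGraph (Fin (n - 2))))) ∨
       Nonempty (G ≃g completeBipartiteGraph (Fin 2) (Fin (n - 2))) ∨
       Nonempty (G ≃g graphJoin (⊥ : SimpleGraph (Fin (n - 2))) (⊤ : SimpleGraph (Fin 2)))) := by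
  rw [← Nat.card_eq_fintype_card] at hn
  constructor
  · intro hτ
    have : Nonempty V := Nat.card_pos_iff.mp (by omega) |>.1
    obtain ⟨u, hu⟩ := exists_ncard_twinClass_eq_twinNumber G
    have hC : (twinClass G u)ᶜ.ncard = 2 := by rw [Set.ncard_compl, hu, hτ, hn]; omega
    obtain ⟨x, y, hxy, hxy_eq⟩ := Set.ncard_eq_two.mp hC
    exact nonempty_iso_of_twinClass_compl_eq_pair hG hxy hxy_eq (hu.trans hτ)
  · have : Nontrivial (Fin (n - 2)) := Fin.nontrivial_iff_two_le.mpr (by omega)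
    rintro (⟨⟨e⟩⟩ | ⟨⟨e⟩⟩ | ⟨⟨e⟩⟩ | ⟨⟨e⟩⟩) <;> rw [e.twinNumber_eq]
    · simpa using twinNumber_graphJoin_top_bot (α := Fin (n - 2)) (β := Fin 2) (by simp; omega)
    · simpa using twinNumber_graphJoin_graphSum (γ := Fin 1) (α := Fin 1) (β := Fin (n - 2))
        (by simp; omega)
    · rw [← graphJoinBotBotIso.twinNumber_eq]
      simpa using twinNumber_graphJoin_bot (α := Fin (n - 2)) (⊥ : SimpleGraph (Fin 2))
        (by simp; omega)
    · simpa using twinNumber_graphJoin_bot (α := Fin (n - 2)) (⊤ : SimpleGraph (Fin 2))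
        (by simp; omega)
end
end

section
/- Let k, h be integers with k ≥ 1 and h ≥ k + 2. Then the tree T*(k,h) satisfies τ(T*(k,h)) = k and β_p(T*(k,h)) = h. -/
open Classical SimpleGraph

noncomputable section

/-- The tree `T*(k,h)`: vertices `x = Sum.inl (Sum.inl ())`,
`z = Sum.inl (Sum.inr ())`, leaves `z_i = Sum.inr (Sum.inl i)` for `i : Fin k`,
vertices `x_{(i,j)} = Sum.inr (Sum.inr (Sum.inl (i,j)))` and
`y_{(i,j)} = Sum.inr (Sum.inr (Sum.inr (i,j)))` for `i j : Fin (h-1)`; with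
edges `x x_{(i,j)}`, `x_{(i,j)} y_{(i,j)}`, `x z` and `z z_i`. -/
def tStar (k h : ℕ) :
    SimpleGraph ((Unit ⊕ Unit) ⊕ (Fin k ⊕ (Fin (h - 1) × Fin (h - 1) ⊕ Fin (h - 1) × Fin (h - 1)))) :=
  SimpleGraph.fromRel (fun a b =>
    (a = Sum.inl (Sum.inl ()) ∧
      ∃ p : Fin (h - 1) × Fin (h - 1), b = Sum.inr (Sum.inr (Sum.inl p))) ∨
    (∃ p : Fin (h - 1) × Fin (h - 1),
      a = Sum.inr (Sum.inr (Sum.inl p)) ∧ b = Sum.inr (Sum.inr (Sum.inr p))) ∨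
    (a = Sum.inl (Sum.inl ()) ∧ b = Sum.inl (Sum.inr ())) ∨
    (a = Sum.inl (Sum.inr ()) ∧ ∃ i : Fin k, b = Sum.inr (Sum.inl i)))

/-!
The twins of `T*(k,h)` are exactly the `k` leaves `z_i` hanging at `z`; every other vertex is
distinguished from all others by some neighbour.

For the partition dimension, giving `x` and `z` colour `h - 1` and `x_{(i,j)}`, `y_{(i,j)}`, `z_i`
the colours `i`, `j`, `i` yields a locating partition with `h` parts. Conversely, let `Π` be
locating. The distance vector of `y_{(i,j)}` depends only on the parts containing `x_{(i,j)}` and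
`y_{(i,j)}`, so `(i,j) ↦ (part of x_{(i,j)}, part of y_{(i,j)})` is injective and
`(h-1)^2 ≤ |Π|^2`. Moreover, for a part `A` not containing `x`, the pairs `(A, A)` and
`(A, part of x)` cannot both occur: the two corresponding vertices `x_{(i,j)}` would have the same
distance vector. Hence `(h-1)^2 < |Π|^2`.
-/

namespace SimpleGraph

variable {V : Type*} {G : SimpleGraph V}

section NextHop

variable (d : V → V → ℕ) (hself : ∀ u, d u u = 0)
  (hstep : ∀ u v, u ≠ v → ∃ w, G.Adj u w ∧ d w v + 1 = d u v)
include hself hstep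

theorem exists_walk_length_eq_of_forall_exists_adj (u v : V) :
    ∃ p : G.Walk u v, p.length = d u v := by
  induction hn : d u v generalizing u with
  | zero =>
    obtain rfl : u = v := by_contra fun hne => by
      obtain ⟨w, -, hw⟩ := hstep u v hne; omega
    exact ⟨.nil, rfl⟩
  | succ n ih =>
    obtain ⟨w, hadj, hw⟩ := hstep u v fun huv => by simp [huv, hself] at hn
    obtain ⟨p, hp⟩ := ih w (by omega)
    exact ⟨.cons hadj p, by simp [hp]⟩

theorem dist_eq_of_forall_exists_adj (hlip : ∀ a b v, G.Adj a b → d a v ≤ d b v + 1)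
    (u v : V) : G.dist u v = d u v := by
  obtain ⟨p, hp⟩ := exists_walk_length_eq_of_forall_exists_adj d hself hstep u v
  refine le_antisymm (hp ▸ dist_le p) ?_
  obtain ⟨q, hq⟩ := p.reachable.exists_walk_length_eq_dist
  rw [← hq]
  clear hp hq p
  induction q with
  | nil => simp [hself]
  | cons hadj q ih => simpa using (hlip _ _ _ hadj).trans (Nat.add_le_add_right ih 1)

end NextHop

end SimpleGraph

section SetDist

variable {V : Type*} {G : SimpleGraph V} {u v w : V} {S : Set V}

theorem setDist_le_dist (hw : w ∈ S) : setDist G u S ≤ G.dist u w :=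
  Nat.sInf_le ⟨w, hw, rfl⟩

theorem exists_mem_dist_eq_setDist (hS : S.Nonempty) : ∃ w ∈ S, G.dist u w = setDist G u S :=
  Nat.sInf_mem (hS.image _)

theorem setDist_eq_zero_iff (hG : G.Connected) (hS : S.Nonempty) :
    setDist G u S = 0 ↔ u ∈ S := by
  refine ⟨fun h0 => ?_, fun hu => Nat.le_zero.mp ((setDist_le_dist hu).trans_eq G.dist_self)⟩
  obtain ⟨w, hw, hdist⟩ := exists_mem_dist_eq_setDist (G := G) (u := u) hS
  rwa [hG.dist_eq_zero_iff.mp (hdist.trans h0)]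

theorem setDist_eq_one_of_adj (hG : G.Connected) (hu : u ∉ S) (hw : w ∈ S) (hadj : G.Adj u w) :
    setDist G u S = 1 := by
  refine le_antisymm ((setDist_le_dist hw).trans_eq (dist_eq_one_iff_adj.mpr hadj)) ?_
  rw [Nat.one_le_iff_ne_zero, Ne, setDist_eq_zero_iff hG ⟨w, hw⟩]
  exact hu

theorem setDist_eq_setDist_add (hS : S.Nonempty) (c : ℕ)
    (h : ∀ w ∈ S, G.dist u w = G.dist v w + c) : setDist G u S = setDist G v S + c := by
  obtain ⟨w, hw, hu⟩ := exists_mem_dist_eq_setDist (G := G) (u := u) hS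
  obtain ⟨w', hw', hv⟩ := exists_mem_dist_eq_setDist (G := G) (u := v) hS
  have h1 := (setDist_le_dist (G := G) (u := u) hw').trans_eq (h w' hw')
  have h2 := setDist_le_dist (G := G) (u := v) hw
  have := h w hw
  omega

end SetDist

theorem Setoid.ncard_classes_ker {α β : Type*} (f : α → β) :
    (Setoid.ker f).classes.ncard = (Set.range f).ncard := by
  have hclasses : (Setoid.ker f).classes = (fun b => f ⁻¹' {b}) '' Set.range f := by
    ext s
    simp [Setoid.classes, Setoid.ker_def, eq_comm, Set.preimage, Set.mem_singleton_iff]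
  rw [hclasses, Set.InjOn.ncard_image]
  rintro _ ⟨a, rfl⟩ _ ⟨b, rfl⟩ hab
  exact (Set.ext_iff.mp hab a).mp rfl

namespace Setoid.IsPartition

variable {α : Type*} {P : Set (Set α)} (hP : Setoid.IsPartition P)

def part (a : α) : Set α := (hP.2 a).choose

theorem part_mem (a : α) : hP.part a ∈ P := (hP.2 a).choose_spec.1.1

theorem mem_part (a : α) : a ∈ hP.part a := (hP.2 a).choose_spec.1.2

theorem mem_iff_part_eq {S : Set α} (hS : S ∈ P) {a : α} : a ∈ S ↔ hP.part a = S :=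
  ⟨fun ha => ((hP.2 a).choose_spec.2 S ⟨hS, ha⟩).symm, fun h => h ▸ hP.mem_part a⟩

end Setoid.IsPartition

section IteIte

variable {α : Type*} [DecidableEq α] {m : ℕ}

theorem ite_ite_eq_zero_iff (hm : 1 < m) (a b t : α) :
    (if a = t then 0 else if b = t then 1 else m) = 0 ↔ a = t := by
  split_ifs <;> simp_all; omega

theorem ite_ite_eq_one_iff (hm : 1 < m) (a b t : α) :
    (if a = t then 0 else if b = t then 1 else m) = 1 ↔ a ≠ t ∧ b = t := by
  split_ifs <;> simp_all; omega

theorem eq_and_eq_of_forall_ite_ite_eq (hm : 1 < m) {a b c d : α}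
    (H : ∀ t, (if a = t then 0 else if b = t then 1 else m) =
      (if c = t then 0 else if d = t then 1 else m)) : a = c ∧ b = d := by
  have hca : c = a := (ite_ite_eq_zero_iff hm c d a).mp ((H a).symm.trans (by simp))
  subst hca
  refine ⟨rfl, ?_⟩
  by_cases hbc : c = b
  · by_contra hbd
    have := (ite_ite_eq_one_iff hm c d d).mpr ⟨fun h => hbd (hbc.symm.trans h), rfl⟩
    rw [← H, ite_ite_eq_one_iff hm] at this
    exact hbd this.2
  · have := (ite_ite_eq_one_iff hm c b b).mpr ⟨hbc, rfl⟩
    rw [H, ite_ite_eq_one_iff hm] at this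
    exact this.2.symm

end IteIte

namespace TStar

abbrev V (k h : ℕ) :=
  (Unit ⊕ Unit) ⊕ (Fin k ⊕ (Fin (h - 1) × Fin (h - 1) ⊕ Fin (h - 1) × Fin (h - 1)))

variable {k h : ℕ}

abbrev x : V k h := .inl (.inl ())
abbrev z : V k h := .inl (.inr ())
abbrev zi (i : Fin k) : V k h := .inr (.inl i)
abbrev xp (p : Fin (h - 1) × Fin (h - 1)) : V k h := .inr (.inr (.inl p))
abbrev yp (p : Fin (h - 1) × Fin (h - 1)) : V k h := .inr (.inr (.inr p))

theorem cases (v : V k h) :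
    v = x ∨ v = z ∨ (∃ i, v = zi i) ∨ (∃ p, v = xp p) ∨ ∃ p, v = yp p := by
  rcases v with (⟨⟩ | ⟨⟩) | i | p | p <;> simp

theorem zi_injective : Function.Injective (zi : Fin k → V k h) := fun _ _ hij => by
  simpa using hij

theorem adj_x_xp (p : Fin (h - 1) × Fin (h - 1)) : (tStar k h).Adj x (xp p) := by
  simp [tStar, -Prod.exists]

theorem adj_xp_yp (p : Fin (h - 1) × Fin (h - 1)) : (tStar k h).Adj (xp p) (yp p) := by
  simp [tStar, -Prod.exists]

theorem adj_z_zi (i : Fin k) : (tStar k h).Adj z (zi i) := by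
  simp [tStar]

section Distance

def treeDist : V k h → V k h → ℕ
  | .inl (.inl _), .inl (.inl _) => 0
  | .inl (.inl _), .inl (.inr _) => 1
  | .inl (.inl _), .inr (.inl _) => 2
  | .inl (.inl _), .inr (.inr (.inl _)) => 1
  | .inl (.inl _), .inr (.inr (.inr _)) => 2
  | .inl (.inr _), .inl (.inl _) => 1
  | .inl (.inr _), .inl (.inr _) => 0
  | .inl (.inr _), .inr (.inl _) => 1
  | .inl (.inr _), .inr (.inr (.inl _)) => 2
  | .inl (.inr _), .inr (.inr (.inr _)) => 3
  | .inr (.inl _), .inl (.inl _) => 2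
  | .inr (.inl _), .inl (.inr _) => 1
  | .inr (.inl i), .inr (.inl j) => if i = j then 0 else 2
  | .inr (.inl _), .inr (.inr (.inl _)) => 3
  | .inr (.inl _), .inr (.inr (.inr _)) => 4
  | .inr (.inr (.inl _)), .inl (.inl _) => 1
  | .inr (.inr (.inl _)), .inl (.inr _) => 2
  | .inr (.inr (.inl _)), .inr (.inl _) => 3
  | .inr (.inr (.inl p)), .inr (.inr (.inl q)) => if p = q then 0 else 2
  | .inr (.inr (.inl p)), .inr (.inr (.inr q)) => if p = q then 1 else 3
  | .inr (.inr (.inr _)), .inl (.inl _) => 2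
  | .inr (.inr (.inr _)), .inl (.inr _) => 3
  | .inr (.inr (.inr _)), .inr (.inl _) => 4
  | .inr (.inr (.inr p)), .inr (.inr (.inl q)) => if p = q then 1 else 3
  | .inr (.inr (.inr p)), .inr (.inr (.inr q)) => if p = q then 0 else 4

def nextHop : V k h → V k h → V k h
  | .inl (.inl _), .inl _ => z
  | .inl (.inl _), .inr (.inl _) => z
  | .inl (.inl _), .inr (.inr (.inl q)) => xp q
  | .inl (.inl _), .inr (.inr (.inr q)) => xp q
  | .inl (.inr _), .inr (.inl i) => zi i
  | .inl (.inr _), _ => x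
  | .inr (.inl _), _ => z
  | .inr (.inr (.inl p)), .inr (.inr (.inr q)) => if p = q then yp q else x
  | .inr (.inr (.inl _)), _ => x
  | .inr (.inr (.inr p)), _ => xp p

theorem treeDist_self (v : V k h) : treeDist v v = 0 := by
  rcases v with (⟨⟩ | ⟨⟩) | i | p | p <;> simp [treeDist]

theorem treeDist_le_of_adj {a b : V k h} (hab : (tStar k h).Adj a b) (v : V k h) :
    treeDist a v ≤ treeDist b v + 1 := by
  rcases a with (⟨⟩ | ⟨⟩) | i | p | p <;> rcases b with (⟨⟩ | ⟨⟩) | j | q | q <;>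
    simp [tStar, -Prod.exists] at hab <;> rcases v with (⟨⟩ | ⟨⟩) | l | r | r <;>
    simp only [treeDist] <;> (try split_ifs) <;> simp_all

theorem adj_nextHop {u v : V k h} (huv : u ≠ v) :
    (tStar k h).Adj u (nextHop u v) ∧ treeDist (nextHop u v) v + 1 = treeDist u v := by
  rcases u with (⟨⟩ | ⟨⟩) | i | p | p <;> rcases v with (⟨⟩ | ⟨⟩) | j | q | q <;>
    simp [nextHop, treeDist, tStar, -Prod.exists] at huv ⊢ <;> (try split_ifs) <;> simp_all

theorem dist_eq_treeDist (u v : V k h) : (tStar k h).dist u v = treeDist u v :=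
  SimpleGraph.dist_eq_of_forall_exists_adj treeDist treeDist_self
    (fun _ _ huv => ⟨_, adj_nextHop huv⟩) (fun _ _ v hab => treeDist_le_of_adj hab v) u v

theorem connected_tStar : (tStar k h).Connected := by
  refine ⟨fun u v => ?_⟩
  obtain ⟨p, -⟩ := SimpleGraph.exists_walk_length_eq_of_forall_exists_adj treeDist treeDist_self
    (fun _ _ huv => ⟨_, adj_nextHop huv⟩) u v
  exact p.reachable

theorem adj_iff_treeDist {u v : V k h} : (tStar k h).Adj u v ↔ treeDist u v = 1 := by
  rw [← dist_eq_one_iff_adj, dist_eq_treeDist]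

theorem dist_yp {p : Fin (h - 1) × Fin (h - 1)} {s : V k h} (hs : s ≠ yp p) :
    (tStar k h).dist (yp p) s = (tStar k h).dist (xp p) s + 1 := by
  rw [dist_eq_treeDist, dist_eq_treeDist]
  rcases s with (⟨⟩ | ⟨⟩) | i | q | q <;> simp [treeDist] at hs ⊢ <;> split_ifs <;> simp_all

theorem dist_xp {p : Fin (h - 1) × Fin (h - 1)} {s : V k h} (hx : s ≠ xp p) (hy : s ≠ yp p) :
    (tStar k h).dist (xp p) s = (tStar k h).dist x s + 1 := by
  rw [dist_eq_treeDist, dist_eq_treeDist]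
  rcases s with (⟨⟩ | ⟨⟩) | i | q | q <;> simp_all [treeDist, eq_comm]

theorem dist_zi {i : Fin k} {s : V k h} (hs : s ≠ zi i) :
    (tStar k h).dist (zi i) s = (tStar k h).dist z s + 1 := by
  rw [dist_eq_treeDist, dist_eq_treeDist]
  rcases s with (⟨⟩ | ⟨⟩) | j | q | q <;> simp_all [treeDist, eq_comm]

theorem dist_z {s : V k h} (hz : s ≠ z) (hzi : ∀ i, s ≠ zi i) :
    (tStar k h).dist z s = (tStar k h).dist x s + 1 := by
  rw [dist_eq_treeDist, dist_eq_treeDist]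
  rcases s with (⟨⟩ | ⟨⟩) | j | q | q <;> simp [treeDist] at hz hzi ⊢

end Distance

section SetDist

variable {S : Set (V k h)}

theorem setDist_yp (hS : S.Nonempty) {p : Fin (h - 1) × Fin (h - 1)} (hy : yp p ∉ S) :
    setDist (tStar k h) (yp p) S = setDist (tStar k h) (xp p) S + 1 :=
  setDist_eq_setDist_add hS 1 fun _ hs => dist_yp (ne_of_mem_of_not_mem hs hy)

theorem setDist_xp (hS : S.Nonempty) {p : Fin (h - 1) × Fin (h - 1)} (hx : xp p ∉ S)
    (hy : yp p ∈ S → x ∈ S) : setDist (tStar k h) (xp p) S = setDist (tStar k h) x S + 1 := by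
  by_cases hyS : yp p ∈ S
  · rw [(setDist_eq_zero_iff connected_tStar hS).mpr (hy hyS),
      setDist_eq_one_of_adj connected_tStar hx hyS (adj_xp_yp p)]
  · exact setDist_eq_setDist_add hS 1 fun _ hs =>
      dist_xp (ne_of_mem_of_not_mem hs hx) (ne_of_mem_of_not_mem hs hyS)

theorem setDist_zi (hS : S.Nonempty) {i : Fin k} (hz : zi i ∉ S) :
    setDist (tStar k h) (zi i) S = setDist (tStar k h) z S + 1 :=
  setDist_eq_setDist_add hS 1 fun _ hs => dist_zi (ne_of_mem_of_not_mem hs hz)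

theorem setDist_z (hS : S.Nonempty) (hz : z ∉ S) (hzi : ∀ i, zi i ∉ S) :
    setDist (tStar k h) z S = setDist (tStar k h) x S + 1 :=
  setDist_eq_setDist_add hS 1 fun _ hs =>
    dist_z (ne_of_mem_of_not_mem hs hz) fun i => ne_of_mem_of_not_mem hs (hzi i)

end SetDist

section Twins

theorem isTwin_iff (hh : 2 ≤ h) {u v : V k h} :
    IsTwin (tStar k h) u v ↔ u = v ∨ ∃ i j, u = zi i ∧ v = zi j := by
  constructor
  · intro htw
    have H w := Set.ext_iff.mp htw w
    simp only [Set.mem_sdiff, mem_neighborSet, Set.mem_singleton_iff, adj_iff_treeDist] at H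
    have h0 : 0 < h - 1 := by omega
    -- one of these vertices is a neighbour of exactly one of `u`, `v` whenever they are not twins
    have Hx := H x
    have Hz := H z
    have H0 := H (xp (⟨0, h0⟩, ⟨0, h0⟩))
    rcases u with (⟨⟩ | ⟨⟩) | i | p | p <;> rcases v with (⟨⟩ | ⟨⟩) | j | q | q <;>
      (try have Hxp := H (xp p)) <;> (try have Hyp := H (yp p)) <;>
      (try have Hxq := H (xp q)) <;> (try have Hyq := H (yp q)) <;>
      clear H <;> simp_all [treeDist]
  · rintro (rfl | ⟨i, j, rfl, rfl⟩)
    · rfl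
    · ext ((⟨⟩ | ⟨⟩) | l | r | r) <;> simp [tStar, -Prod.exists]

theorem twinClass_zi (hh : 2 ≤ h) (i : Fin k) :
    twinClass (tStar k h) (zi i) = Set.range zi := by
  ext v
  simp only [twinClass, Set.mem_ofPred_eq, isTwin_iff hh, Set.mem_range]
  constructor
  · rintro (rfl | ⟨-, j, -, rfl⟩) <;> exact ⟨_, rfl⟩
  · rintro ⟨j, rfl⟩
    exact .inr ⟨i, j, rfl, rfl⟩

theorem twinClass_eq_singleton (hh : 2 ≤ h) {u : V k h} (hu : u ∉ Set.range zi) :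
    twinClass (tStar k h) u = {u} := by
  ext v
  simp only [twinClass, Set.mem_ofPred_eq, isTwin_iff hh, Set.mem_singleton_iff]
  exact ⟨fun h => (h.resolve_right fun ⟨i, _, hi, _⟩ => hu ⟨i, hi.symm⟩).symm, fun h => .inl h.symm⟩

theorem twinNumber_tStar (hk : 1 ≤ k) (hh : 2 ≤ h) : twinNumber (tStar k h) = k := by
  have hcard : (Set.range (zi : Fin k → V k h)).ncard = k := by
    simp [Set.ncard_range_of_injective zi_injective]
  refine IsGreatest.csSup_eq ⟨⟨zi ⟨0, hk⟩, by rw [twinClass_zi hh, hcard]⟩, ?_⟩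
  rintro _ ⟨u, rfl⟩
  by_cases hu : u ∈ Set.range zi
  · obtain ⟨i, rfl⟩ := hu
    rw [twinClass_zi hh, hcard]
  · rw [twinClass_eq_singleton hh hu, Set.ncard_singleton]
    exact hk

end Twins

section UpperBound

def color : V k h → ℕ
  | .inl _ => h - 1
  | .inr (.inl i) => i
  | .inr (.inr (.inl p)) => p.1
  | .inr (.inr (.inr p)) => p.2

theorem range_color (hh : k + 2 ≤ h) : Set.range (color : V k h → ℕ) = Set.Iio h := by
  ext n
  simp only [Set.mem_range, Set.mem_Iio]
  constructor
  · rintro ⟨(⟨⟩ | ⟨⟩) | i | p | p, rfl⟩ <;> simp [color] <;> omega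
  · intro hn
    rcases Nat.lt_or_ge n (h - 1) with hn' | hn'
    · exact ⟨xp (⟨n, hn'⟩, ⟨n, hn'⟩), rfl⟩
    · exact ⟨x, by simp [color]; omega⟩

theorem nonempty_color_last : ((color : V k h → ℕ) ⁻¹' {h - 1}).Nonempty := ⟨x, rfl⟩

section ColorClass

variable (t : Fin (h - 1))

theorem nonempty_color : ((color : V k h → ℕ) ⁻¹' {(t : ℕ)}).Nonempty := ⟨xp (t, t), rfl⟩

theorem setDist_x_color_last : setDist (tStar k h) x ((color : V k h → ℕ) ⁻¹' {h - 1}) = 0 :=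
  (setDist_eq_zero_iff connected_tStar nonempty_color_last).mpr rfl

theorem setDist_x_color : setDist (tStar k h) x ((color : V k h → ℕ) ⁻¹' {(t : ℕ)}) = 1 :=
  setDist_eq_one_of_adj connected_tStar (by simp [color]; omega) rfl (adj_x_xp (t, t))

theorem setDist_z_color_last : setDist (tStar k h) z ((color : V k h → ℕ) ⁻¹' {h - 1}) = 0 :=
  (setDist_eq_zero_iff connected_tStar nonempty_color_last).mpr rfl

theorem setDist_z_color : setDist (tStar k h) z ((color : V k h → ℕ) ⁻¹' {(t : ℕ)}) =
    if (t : ℕ) < k then 1 else 2 := by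
  split_ifs with htk
  · exact setDist_eq_one_of_adj connected_tStar (by simp [color]; omega) rfl (adj_z_zi ⟨t, htk⟩)
  · rw [setDist_z (nonempty_color t) (by simp [color]; omega) (by simp [color]; omega),
      setDist_x_color]

theorem setDist_zi_color_last (hkh : k < h) (i : Fin k) :
    setDist (tStar k h) (zi i) ((color : V k h → ℕ) ⁻¹' {h - 1}) = 1 := by
  rw [setDist_zi nonempty_color_last (by simp [color]; omega), setDist_z_color_last]

theorem setDist_zi_color (i : Fin k) :
    setDist (tStar k h) (zi i) ((color : V k h → ℕ) ⁻¹' {(t : ℕ)}) =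
      if (i : ℕ) = t then 0 else if (t : ℕ) < k then 2 else 3 := by
  split_ifs with hit
  · exact (setDist_eq_zero_iff connected_tStar (nonempty_color t)).mpr hit
  all_goals rw [setDist_zi (nonempty_color t) hit, setDist_z_color]; simp [*]

theorem setDist_xp_color_last (p : Fin (h - 1) × Fin (h - 1)) :
    setDist (tStar k h) (xp p) ((color : V k h → ℕ) ⁻¹' {h - 1}) = 1 := by
  rw [setDist_xp nonempty_color_last (by simp [color]; omega) fun _ => rfl,
    setDist_x_color_last]

theorem setDist_xp_color (p : Fin (h - 1) × Fin (h - 1)) :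
    setDist (tStar k h) (xp p) ((color : V k h → ℕ) ⁻¹' {(t : ℕ)}) =
      if p.1 = t then 0 else if p.2 = t then 1 else 2 := by
  split_ifs with h1 h2
  · exact (setDist_eq_zero_iff connected_tStar (nonempty_color t)).mpr (by simp [color, h1])
  · exact setDist_eq_one_of_adj connected_tStar (by simpa [color, Fin.val_inj] using h1)
      (by simp [color, h2]) (adj_xp_yp p)
  · rw [setDist_xp (nonempty_color t) (by simpa [color, Fin.val_inj] using h1)
      (by simp [color, Fin.val_inj, h2]), setDist_x_color]

theorem setDist_yp_color_last (p : Fin (h - 1) × Fin (h - 1)) :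
    setDist (tStar k h) (yp p) ((color : V k h → ℕ) ⁻¹' {h - 1}) = 2 := by
  rw [setDist_yp nonempty_color_last (by simp [color]; omega), setDist_xp_color_last]

theorem setDist_yp_color (p : Fin (h - 1) × Fin (h - 1)) :
    setDist (tStar k h) (yp p) ((color : V k h → ℕ) ⁻¹' {(t : ℕ)}) =
      if p.2 = t then 0 else if p.1 = t then 1 else 3 := by
  split_ifs with h2 h1
  · exact (setDist_eq_zero_iff connected_tStar (nonempty_color t)).mpr (by simp [color, h2])
  all_goals rw [setDist_yp (nonempty_color t) (by simpa [color, Fin.val_inj] using h2),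
    setDist_xp_color]; simp [h1, h2]

end ColorClass

theorem eq_of_forall_setDist_color_eq (hh : k + 2 ≤ h) {u v : V k h}
    (H : ∀ w : V k h, setDist (tStar k h) u (color ⁻¹' {color w}) =
      setDist (tStar k h) v (color ⁻¹' {color w})) : u = v := by
  have hB : setDist (tStar k h) u (color ⁻¹' {h - 1}) =
      setDist (tStar k h) v (color ⁻¹' {h - 1}) := H x
  have hA (t : Fin (h - 1)) : setDist (tStar k h) u (color ⁻¹' {(t : ℕ)}) =
      setDist (tStar k h) v (color ⁻¹' {(t : ℕ)}) := H (xp (t, t))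
  rcases cases u with rfl | rfl | ⟨i, rfl⟩ | ⟨p, rfl⟩ | ⟨p, rfl⟩ <;>
    rcases cases v with rfl | rfl | ⟨j, rfl⟩ | ⟨q, rfl⟩ | ⟨q, rfl⟩ <;>
    simp only [setDist_x_color_last, setDist_z_color_last, setDist_zi_color_last (by omega : k < h),
      setDist_xp_color_last, setDist_yp_color_last, setDist_x_color, setDist_z_color,
      setDist_zi_color, setDist_xp_color, setDist_yp_color] at hB hA
  -- the parts of colours `h - 1` and `k` separate vertices of different kinds; `x_p` and `y_p`
  -- are recovered from the parts at distance `0` and `1`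
  all_goals first
    | rfl
    | omega
    | (exfalso; have hAk := hA ⟨k, by omega⟩; simp at hAk <;> split_ifs at hAk <;> omega)
    | (have hAi := hA ⟨i, by omega⟩; simp at hAi; exact congrArg zi (Fin.ext hAi.symm))
    | (obtain ⟨h1, h2⟩ := eq_and_eq_of_forall_ite_ite_eq (by norm_num) hA; simp [Prod.ext_iff, *])

theorem isLocatingPartition_classes_ker_color (hh : k + 2 ≤ h) :
    IsLocatingPartition (tStar k h) (Setoid.ker color).classes :=
  ⟨Setoid.isPartition_classes _, fun _ _ H =>
    eq_of_forall_setDist_color_eq hh fun w => H _ (Setoid.mem_classes _ w)⟩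

theorem ncard_classes_ker_color (hh : k + 2 ≤ h) :
    (Setoid.ker (color : V k h → ℕ)).classes.ncard = h := by
  rw [Setoid.ncard_classes_ker, range_color hh, Set.ncard_Iio_nat]

end UpperBound

section LowerBound

variable {S : Set (V k h)} {P : Set (Set (V k h))}

theorem setDist_xp_eq_of_mem_iff (hS : S.Nonempty) {p q : Fin (h - 1) × Fin (h - 1)}
    (hx : xp p ∈ S ↔ xp q ∈ S) (hy : yp p ∈ S ↔ yp q ∈ S) :
    setDist (tStar k h) (xp p) S = setDist (tStar k h) (xp q) S := by
  by_cases hxS : xp p ∈ S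
  · rw [(setDist_eq_zero_iff connected_tStar hS).mpr hxS,
      (setDist_eq_zero_iff connected_tStar hS).mpr (hx.mp hxS)]
  by_cases hyS : yp p ∈ S
  · rw [setDist_eq_one_of_adj connected_tStar hxS hyS (adj_xp_yp p),
      setDist_eq_one_of_adj connected_tStar (hx.not.mp hxS) (hy.mp hyS) (adj_xp_yp q)]
  rw [setDist_xp hS hxS (absurd · hyS), setDist_xp hS (hx.not.mp hxS) (absurd · (hy.not.mp hyS))]

theorem setDist_yp_eq_of_mem_iff (hS : S.Nonempty) {p q : Fin (h - 1) × Fin (h - 1)}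
    (hx : xp p ∈ S ↔ xp q ∈ S) (hy : yp p ∈ S ↔ yp q ∈ S) :
    setDist (tStar k h) (yp p) S = setDist (tStar k h) (yp q) S := by
  by_cases hyS : yp p ∈ S
  · rw [(setDist_eq_zero_iff connected_tStar hS).mpr hyS,
      (setDist_eq_zero_iff connected_tStar hS).mpr (hy.mp hyS)]
  rw [setDist_yp hS hyS, setDist_yp hS (hy.not.mp hyS), setDist_xp_eq_of_mem_iff hS hx hy]

variable (hP : IsLocatingPartition (tStar k h) P)
include hP

theorem eq_of_part_xp_eq_of_part_yp_eq {p q : Fin (h - 1) × Fin (h - 1)}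
    (hx : hP.1.part (xp p) = hP.1.part (xp q)) (hy : hP.1.part (yp p) = hP.1.part (yp q)) :
    p = q := by
  have hyy := hP.2 (yp p) (yp q) fun S hS =>
    setDist_yp_eq_of_mem_iff (Setoid.nonempty_of_mem_partition hP.1 hS)
      (by rw [hP.1.mem_iff_part_eq hS, hP.1.mem_iff_part_eq hS, hx])
      (by rw [hP.1.mem_iff_part_eq hS, hP.1.mem_iff_part_eq hS, hy])
  simpa using hyy

theorem part_xp_eq_part_x {p q : Fin (h - 1) × Fin (h - 1)}
    (hx : hP.1.part (xp p) = hP.1.part (xp q)) (hyp : hP.1.part (yp p) = hP.1.part (xp p))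
    (hyq : hP.1.part (yp q) = hP.1.part x) : hP.1.part (xp p) = hP.1.part x := by
  have hxx := hP.2 (xp p) (xp q) fun S hS => by
    have hSne := Setoid.nonempty_of_mem_partition hP.1 hS
    have mem {v : V k h} : v ∈ S ↔ hP.1.part v = S := hP.1.mem_iff_part_eq hS
    by_cases hpS : hP.1.part (xp p) = S
    · rw [(setDist_eq_zero_iff connected_tStar hSne).mpr (mem.mpr hpS),
        (setDist_eq_zero_iff connected_tStar hSne).mpr (mem.mpr (hx ▸ hpS))]
    · rw [setDist_xp hSne (mt mem.mp hpS) fun hy => absurd (hyp.symm.trans (mem.mp hy)) hpS,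
        setDist_xp hSne (mt mem.mp (hx ▸ hpS)) fun hy => mem.mpr (hyq.symm.trans (mem.mp hy))]
  obtain rfl : p = q := by simpa using hxx
  rw [← hyp, hyq]

theorem le_ncard_of_isLocatingPartition (hh : 3 ≤ h) : h ≤ P.ncard := by
  have hPfin : P.Finite := Set.toFinite P
  let F (p : Fin (h - 1) × Fin (h - 1)) : Set (V k h) × Set (V k h) :=
    (hP.1.part (xp p), hP.1.part (yp p))
  have hF : Function.Injective F := fun p q hpq =>
    eq_of_part_xp_eq_of_part_yp_eq hP (congrArg Prod.fst hpq) (congrArg Prod.snd hpq)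
  have hFP : Set.range F ⊆ P ×ˢ P := by
    rintro _ ⟨p, rfl⟩
    exact ⟨hP.1.part_mem _, hP.1.part_mem _⟩
  have hcardF : (Set.range F).ncard = (h - 1) * (h - 1) := by
    simp [Set.ncard_range_of_injective hF]
  have hsq : (h - 1) * (h - 1) ≤ P.ncard * P.ncard := by
    rw [← hcardF, ← Set.ncard_prod]
    exact Set.ncard_le_ncard hFP (hPfin.prod hPfin)
  have hle : h - 1 ≤ P.ncard := (mul_self_le_mul_self_iff (Nat.zero_le _) (Nat.zero_le _)).mpr hsq
  obtain ⟨A, hA, hAx⟩ := Set.exists_ne_of_one_lt_ncard (s := P) (by omega) (hP.1.part x)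
  obtain ⟨c, hc, hcF⟩ : ∃ c ∈ P ×ˢ P, c ∉ Set.range F := by
    by_contra! hall
    obtain ⟨p, hp⟩ := hall (A, A) ⟨hA, hA⟩
    obtain ⟨q, hq⟩ := hall (A, hP.1.part x) ⟨hA, hP.1.part_mem x⟩
    simp only [F, Prod.mk.injEq] at hp hq
    exact hAx (hp.1 ▸ part_xp_eq_part_x hP (hp.1.trans hq.1.symm) (hp.2.trans hp.1.symm) hq.2)
  have hlt : (h - 1) * (h - 1) < P.ncard * P.ncard := by
    rw [← hcardF, ← Set.ncard_prod]
    exact Set.ncard_lt_ncard (hFP.ssubset_of_ne fun he => hcF (he ▸ hc)) (hPfin.prod hPfin)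
  have := (mul_self_lt_mul_self_iff (Nat.zero_le _) (Nat.zero_le _)).mpr hlt
  omega

end LowerBound

theorem partitionDim_tStar (hk : 1 ≤ k) (hh : k + 2 ≤ h) : partitionDim (tStar k h) = h :=
  IsLeast.csInf_eq ⟨⟨_, isLocatingPartition_classes_ker_color hh, ncard_classes_ker_color hh⟩,
    by rintro _ ⟨P, hP, rfl⟩; exact le_ncard_of_isLocatingPartition hP (by omega)⟩

end TStar

/-- For integers `k ≥ 1` and `h ≥ k + 2`, the tree `T*(k,h)` has twin number `k`
and partition dimension `h`. -/
theorem tStar_twinNumber_partitionDim (k h : ℕ) (hk : 1 ≤ k) (hh : k + 2 ≤ h) :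
    twinNumber (tStar k h) = k ∧ partitionDim (tStar k h) = h :=
  ⟨TStar.twinNumber_tStar hk (by omega), TStar.partitionDim_tStar hk hh⟩
end
end
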